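/- arXiv:1804.02730 — 3 statements merged into one kernel-verified Lean document; each statement's English description precedes it below -/
import Mathlib

section
/- For every integer N ≥ 3, the N-gonal arrangement P_N is supersolvable; in fact, the center (0:0:1) of the N-gon is a modular point of P_N. -/
open MvPolynomial

noncomputable section

abbrev Pt : Type := Projectivization ℂ (Fin 3 → ℂ)
abbrev S3 : Type := MvPolynomial (Fin 3) ℂ

/-- The point `P` lies on the line with coefficient vector `L`. -/
def onLine (L P : Pt) : Prop := ∑ i, L.rep i * P.rep i = 0

/-- The number of lines of the arrangement `A` passing through the point `P`. -/
def mult (A : Set Pt) (P : Pt) : ℕ := {L ∈ A | onLine L P}.ncard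

/-- The singular points of the arrangement: points on at least two lines. -/
def Sing (A : Set Pt) : Set Pt := {P | 2 ≤ mult A P}

/-- The maximal multiplicity of a singular point of the arrangement. -/
def maxMult (A : Set Pt) : ℕ := sSup (mult A '' Sing A)

def Modular (A : Set Pt) (P : Pt) : Prop :=
  P ∈ Sing A ∧ ∀ Q ∈ Sing A, Q ≠ P → ∃ L ∈ A, onLine L P ∧ onLine L Q

def Supersolvable (A : Set Pt) : Prop := ∃ P, Modular A P

/-- The homogeneous radical ideal of a set of points. -/
def vanishingIdeal (Z : Set Pt) : Ideal S3 where
  carrier := {f | ∀ (v : Fin 3 → ℂ) (hv : v ≠ 0), Projectivization.mk ℂ v hv ∈ Z → eval v f = 0}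
  add_mem' := by
    intro f g hf hg v hv hvZ
    simp [hf v hv hvZ, hg v hv hvZ]
  zero_mem' := by
    intro v hv hvZ
    simp
  smul_mem' := by
    intro c f hf v hv hvZ
    simp [smul_eq_mul, hf v hv hvZ]

def pointIdeal (Q : Pt) : Ideal S3 := vanishingIdeal {Q}

def homogComponent (I : Ideal S3) (t : ℕ) : Submodule ℂ S3 :=
  (Submodule.restrictScalars ℂ I) ⊓ homogeneousSubmodule (Fin 3) ℂ t

/-- `dim_ℂ [I]_t`. -/
def dimHomog (I : Ideal S3) (t : ℕ) : ℕ := Module.finrank ℂ (homogComponent I t)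

/-- A property holds for all points in some nonempty Zariski-open subset of ℙ². -/
def Generically (Φ : Pt → Prop) : Prop :=
  ∃ g : S3, g ≠ 0 ∧ (∃ d, g.IsHomogeneous d) ∧ ∀ Q : Pt, eval Q.rep g ≠ 0 → Φ Q

/-- `Z` admits an unexpected curve of degree `j+1`. -/
def admitsUnexpectedDeg (Z : Set Pt) (j : ℕ) : Prop :=
  Generically fun Q =>
    dimHomog (vanishingIdeal Z ⊓ pointIdeal Q ^ j) (j + 1) >
      max (dimHomog (vanishingIdeal Z) (j + 1) - j * (j + 1) / 2) 0

def AdmitsUnexpected (Z : Set Pt) : Prop := ∃ j, 1 ≤ j ∧ admitsUnexpectedDeg Z j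

/-- The linear form defining the line `L`. -/
def linForm (L : Pt) : S3 := ∑ i, C (L.rep i) * X i

/-- The defining polynomial of a line arrangement. -/
def arrPoly (A : Set Pt) : S3 := ∏ᶠ L ∈ A, linForm L

/-- The arrangement `A` is free with exponents `(a, b)`. -/
def FreeWithExp (A : Set Pt) (a b : ℕ) : Prop :=
  ∃ u v : Fin 3 → S3,
    (∑ i, u i * pderiv i (arrPoly A) = 0) ∧
    (∑ i, v i * pderiv i (arrPoly A) = 0) ∧
    (∀ i, (u i).IsHomogeneous a) ∧ (∀ i, (v i).IsHomogeneous b) ∧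
    ∀ w : Fin 3 → S3, (∑ i, w i * pderiv i (arrPoly A) = 0) →
      ∃! pq : S3 × S3, w = pq.1 • u + pq.2 • v

def cvec (a b c : ℂ) : Fin 3 → ℂ := ![a, b, c]

lemma cvec_ne_zero₀ {a : ℂ} (h : a ≠ 0) (b c : ℂ) : cvec a b c ≠ 0 := by
  intro H; exact h (by simpa [cvec] using congrFun H 0)

lemma cvec_ne_zero₁ (a : ℂ) {b : ℂ} (h : b ≠ 0) (c : ℂ) : cvec a b c ≠ 0 := by
  intro H; exact h (by simpa [cvec] using congrFun H 1)

lemma cvec_ne_zero₂ (a b : ℂ) {c : ℂ} (h : c ≠ 0) : cvec a b c ≠ 0 := by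
  intro H; exact h (by simpa [cvec] using congrFun H 2)

def mkLine (a b c : ℂ) (h : cvec a b c ≠ 0) : Pt := Projectivization.mk ℂ (cvec a b c) h

/-- vector with two real first coordinates -/
def rvec (a b : ℝ) (c : ℂ) : Fin 3 → ℂ := ![(a : ℂ), (b : ℂ), c]

lemma rvec_ne_zero {a b : ℝ} (h : a ≠ 0 ∨ b ≠ 0) (c : ℂ) : rvec a b c ≠ 0 := by
  intro H
  rcases h with h | h
  · exact h (by exact_mod_cast (by simpa [rvec] using congrFun H 0 : (a : ℂ) = 0))
  · exact h (by exact_mod_cast (by simpa [rvec] using congrFun H 1 : (b : ℂ) = 0))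

lemma sincos_ne (θ : ℝ) : Real.cos θ ≠ 0 ∨ Real.sin θ ≠ 0 := by
  by_contra h
  push_neg at h
  have h1 := Real.sin_sq_add_cos_sq θ
  rw [h.2, h.1] at h1
  norm_num at h1

lemma sincos_ne' (θ : ℝ) : Real.sin θ ≠ 0 ∨ -Real.cos θ ≠ 0 := by
  rcases sincos_ne θ with h | h
  · exact Or.inr (neg_ne_zero.mpr h)
  · exact Or.inl h

/-- The line supporting the `k`-th side of the regular `N`-gon. -/
def sideLine (N k : ℕ) : Pt :=
  Projectivization.mk ℂ
    (rvec (Real.cos ((2 * (k : ℝ) + 1) * Real.pi / (N : ℝ)))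
      (Real.sin ((2 * (k : ℝ) + 1) * Real.pi / (N : ℝ)))
      (-((Real.cos (Real.pi / (N : ℝ)) : ℝ) : ℂ)))
    (rvec_ne_zero (sincos_ne _) _)

/-- The `k`-th symmetry axis of the regular `N`-gon. -/
def axisLine (N k : ℕ) : Pt :=
  Projectivization.mk ℂ
    (rvec (Real.sin ((k : ℝ) * Real.pi / (N : ℝ)))
      (-Real.cos ((k : ℝ) * Real.pi / (N : ℝ))) 0)
    (rvec_ne_zero (sincos_ne' _) _)

/-- The `N`-gonal arrangement `P_N`. -/
def PgonArr (N : ℕ) : Set Pt :=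
  {L | ∃ k < N, L = sideLine N k} ∪ {L | ∃ k < N, L = axisLine N k}

/-- The line `z = 0` at infinity (whose dual point, the center `(0:0:1)`, has the
same homogeneous coordinates). -/
def zLine : Pt := mkLine 0 0 1 (cvec_ne_zero₂ _ _ (by norm_num))

/-- The complete `N`-gonal arrangement. -/
def PbarArr (N : ℕ) : Set Pt := PgonArr N ∪ {zLine}

-- tic-tac-toe
def vertLine (i : ℤ) : Pt := mkLine 1 0 (-(i : ℂ)) (cvec_ne_zero₀ (by norm_num) _ _)
def horizLine (i : ℤ) : Pt := mkLine 0 1 (-(i : ℂ)) (cvec_ne_zero₁ _ (by norm_num) _)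
def diagLine (i : ℤ) : Pt := mkLine 1 (-1) (i : ℂ) (cvec_ne_zero₀ (by norm_num) _ _)
def antiDiagLine (i : ℤ) : Pt := mkLine 1 1 (i : ℂ) (cvec_ne_zero₀ (by norm_num) _ _)

/-- The complete tic-tac-toe arrangement `T̄_k^j`. -/
def TTT (k j : ℕ) : Set Pt :=
  {L | ∃ i : ℤ, -(k : ℤ) ≤ i ∧ i ≤ (k : ℤ) ∧ L = vertLine i} ∪
  {L | ∃ i : ℤ, -(k : ℤ) ≤ i ∧ i ≤ (k : ℤ) ∧ L = horizLine i} ∪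
  {L | ∃ i : ℤ, -(j : ℤ) ≤ i ∧ i ≤ (j : ℤ) ∧ L = diagLine i} ∪
  {L | ∃ i : ℤ, -(j : ℤ) ≤ i ∧ i ≤ (j : ℤ) ∧ L = antiDiagLine i} ∪
  {zLine}


open Projectivization in
lemma onLine_mk' {v w : Fin 3 → ℂ} (hv : v ≠ 0) (hw : w ≠ 0) :
    onLine (Projectivization.mk ℂ v hv) (Projectivization.mk ℂ w hw) ↔ ∑ i, v i * w i = 0 := by
  obtain ⟨a, ha⟩ := Projectivization.exists_smul_eq_mk_rep ℂ v hv
  obtain ⟨b, hb⟩ := Projectivization.exists_smul_eq_mk_rep ℂ w hw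
  unfold onLine
  rw [← ha, ← hb]
  have h : ∑ i, (a • v) i * (b • w) i = ((a : ℂ) * b) * ∑ i, v i * w i := by
    rw [Finset.mul_sum]
    refine Finset.sum_congr rfl fun i _ => ?_
    simp only [Pi.smul_apply, Units.smul_def, smul_eq_mul]
    ring
  rw [h, mul_eq_zero, mul_eq_zero]
  simp [Units.ne_zero]

lemma onLine_mk_left {v : Fin 3 → ℂ} (hv : v ≠ 0) (Q : Pt) :
    onLine (Projectivization.mk ℂ v hv) Q ↔ ∑ i, v i * Q.rep i = 0 := by
  conv_lhs => rw [← Q.mk_rep]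
  exact onLine_mk' hv Q.rep_nonzero

lemma onLine_side_iff (N k : ℕ) (Q : Pt) :
    onLine (sideLine N k) Q ↔
      (Real.cos ((2 * (k : ℝ) + 1) * Real.pi / N) : ℂ) * Q.rep 0
        + (Real.sin ((2 * (k : ℝ) + 1) * Real.pi / N) : ℂ) * Q.rep 1
        - (Real.cos (Real.pi / N) : ℂ) * Q.rep 2 = 0 := by
  rw [sideLine, onLine_mk_left]
  simp only [rvec, Fin.sum_univ_three, Matrix.cons_val_zero, Matrix.cons_val_one,
    Matrix.head_cons, Matrix.cons_val_two, Matrix.tail_cons]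
  constructor <;> intro h <;> linear_combination h

lemma onLine_axis_iff (N k : ℕ) (Q : Pt) :
    onLine (axisLine N k) Q ↔
      (Real.sin ((k : ℝ) * Real.pi / N) : ℂ) * Q.rep 0
        - (Real.cos ((k : ℝ) * Real.pi / N) : ℂ) * Q.rep 1 = 0 := by
  rw [axisLine, onLine_mk_left]
  simp only [rvec, Fin.sum_univ_three, Matrix.cons_val_zero, Matrix.cons_val_one,
    Matrix.head_cons, Matrix.cons_val_two, Matrix.tail_cons, Complex.ofReal_neg]
  constructor <;> intro h <;> linear_combination h

lemma axis_mem (N k : ℕ) (hk : k < N) : axisLine N k ∈ PgonArr N :=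
  Or.inr ⟨k, hk, rfl⟩

lemma axis_through_center (N k : ℕ) : onLine (axisLine N k) zLine := by
  rw [axisLine, zLine, mkLine, onLine_mk']
  simp [rvec, cvec, Fin.sum_univ_three]

lemma pgon_finite (N : ℕ) : (PgonArr N).Finite := by
  apply Set.Finite.union
  · apply Set.Finite.subset (Set.finite_range fun k : Fin N => sideLine N k)
    rintro L ⟨k, hk, rfl⟩
    exact ⟨⟨k, hk⟩, rfl⟩
  · apply Set.Finite.subset (Set.finite_range fun k : Fin N => axisLine N k)
    rintro L ⟨k, hk, rfl⟩
    exact ⟨⟨k, hk⟩, rfl⟩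

lemma sin_pi_div_ne (N : ℕ) (hN : 3 ≤ N) : Real.sin (Real.pi / N) ≠ 0 := by
  have hNpos : (0:ℝ) < N := by exact_mod_cast (by omega : 0 < N)
  have h1 : 0 < Real.pi / N := by positivity
  have h2 : Real.pi / N < Real.pi := by
    rw [div_lt_iff₀ hNpos]
    have h3 : (3:ℝ) ≤ N := by exact_mod_cast hN
    nlinarith [Real.pi_pos]
  exact ne_of_gt (Real.sin_pos_of_pos_of_lt_pi h1 h2)

lemma axis01_ne (N : ℕ) (hN : 3 ≤ N) : axisLine N 0 ≠ axisLine N 1 := by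
  intro h
  rw [axisLine, axisLine, Projectivization.mk_eq_mk_iff] at h
  obtain ⟨a, ha⟩ := h
  have h0 := congrFun ha 0
  simp only [rvec, Units.smul_def, Pi.smul_apply, smul_eq_mul, Matrix.cons_val_zero,
    Nat.cast_one, Nat.cast_zero, one_mul, zero_mul, zero_div, Real.sin_zero,
    Complex.ofReal_zero] at h0
  rcases mul_eq_zero.mp h0 with h0 | h0
  · exact Units.ne_zero a h0
  · exact sin_pi_div_ne N hN (Complex.ofReal_eq_zero.mp h0)

lemma side_side_axis (N k l : ℕ) (hN : 3 ≤ N) (hk : k < N) (hl : l < N) (hkl : k ≠ l) (Q : Pt)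
    (h1 : onLine (sideLine N k) Q) (h2 : onLine (sideLine N l) Q) :
    onLine (axisLine N ((k + l + 1) % N)) Q := by
  have hNpos : (0:ℝ) < N := by exact_mod_cast (by omega : 0 < N)
  have hNne : (N:ℝ) ≠ 0 := ne_of_gt hNpos
  rw [onLine_side_iff] at h1 h2
  rw [onLine_axis_iff]
  set q0 := Q.rep 0
  set q1 := Q.rep 1
  set φ : ℝ := ((k : ℝ) + (l : ℝ) + 1) * (Real.pi / N) with hφ
  set δ : ℝ := ((k : ℝ) - (l : ℝ)) * (Real.pi / N) with hδdef
  -- sin δ ≠ 0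
  have hπN : 0 < Real.pi / N := by positivity
  have hlR : (l:ℝ) < N := by exact_mod_cast hl
  have hkR : (k:ℝ) < N := by exact_mod_cast hk
  have hb1 : -(N:ℝ) < (k:ℝ) - l := by
    have := Nat.cast_nonneg (α := ℝ) k; linarith
  have hb2 : (k:ℝ) - l < N := by
    have := Nat.cast_nonneg (α := ℝ) l; linarith
  have hδlo : -Real.pi < δ := by
    rw [hδdef]
    nlinarith [hπN, mul_lt_mul_of_pos_right hb1 hπN, mul_div_cancel₀ Real.pi hNne]
  have hδhi : δ < Real.pi := by
    rw [hδdef]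
    nlinarith [hπN, mul_lt_mul_of_pos_right hb2 hπN, mul_div_cancel₀ Real.pi hNne]
  have hδne : Real.sin δ ≠ 0 := by
    intro h
    rw [Real.sin_eq_zero_iff_of_lt_of_lt hδlo hδhi] at h
    rw [hδdef, mul_eq_zero] at h
    rcases h with h | h
    · exact hkl (by exact_mod_cast sub_eq_zero.mp h)
    · exact absurd h (ne_of_gt hπN)
  -- the half-angle identities
  have e1 : ((2 * (k:ℝ) + 1) * Real.pi / N + (2 * (l:ℝ) + 1) * Real.pi / N) / 2 = φ := by
    rw [hφ]; field_simp; ring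
  have e2 : ((2 * (k:ℝ) + 1) * Real.pi / N - (2 * (l:ℝ) + 1) * Real.pi / N) / 2 = δ := by
    rw [hδdef]; field_simp; ring
  have hc : Real.cos ((2 * (k:ℝ) + 1) * Real.pi / N) - Real.cos ((2 * (l:ℝ) + 1) * Real.pi / N)
      = -2 * Real.sin φ * Real.sin δ := by
    rw [Real.cos_sub_cos, e1, e2]
  have hs : Real.sin ((2 * (k:ℝ) + 1) * Real.pi / N) - Real.sin ((2 * (l:ℝ) + 1) * Real.pi / N)
      = 2 * Real.sin δ * Real.cos φ := by
    rw [Real.sin_sub_sin, e1, e2]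
  have hc' : (Real.cos ((2 * (k:ℝ) + 1) * Real.pi / N) : ℂ)
      - (Real.cos ((2 * (l:ℝ) + 1) * Real.pi / N) : ℂ)
      = -2 * (Real.sin φ : ℂ) * (Real.sin δ : ℂ) := by exact_mod_cast congrArg Complex.ofReal hc
  have hs' : (Real.sin ((2 * (k:ℝ) + 1) * Real.pi / N) : ℂ)
      - (Real.sin ((2 * (l:ℝ) + 1) * Real.pi / N) : ℂ)
      = 2 * (Real.sin δ : ℂ) * (Real.cos φ : ℂ) := by exact_mod_cast congrArg Complex.ofReal hs
  have hδC : (Real.sin δ : ℂ) ≠ 0 := Complex.ofReal_ne_zero.mpr hδne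
  have key : (Real.sin φ : ℂ) * q0 - (Real.cos φ : ℂ) * q1 = 0 := by
    apply mul_left_cancel₀ (mul_ne_zero (show (-2:ℂ) ≠ 0 by norm_num) hδC)
    rw [mul_zero]
    linear_combination h1 - h2 - q0 * hc' - q1 * hs'
  -- relate φ to the axis angle
  set m : ℕ := (k + l + 1) % N with hm
  have hdiv : m + N * ((k + l + 1) / N) = k + l + 1 := Nat.mod_add_div _ _
  have hq2 : (k + l + 1) / N < 2 := Nat.div_lt_of_lt_mul (by omega)
  have hdivR : (m:ℝ) + (N:ℝ) * (((k + l + 1) / N : ℕ) : ℝ) = (k:ℝ) + l + 1 := by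
    exact_mod_cast hdiv
  interval_cases (k + l + 1) / N
  · have hmR : (m:ℝ) = (k:ℝ) + l + 1 := by push_cast at hdivR; linarith
    have hang : (m:ℝ) * Real.pi / N = φ := by
      rw [hφ, hmR, mul_div_assoc]
    rw [hang]
    exact key
  · have hmR : (m:ℝ) = (k:ℝ) + l + 1 - N := by push_cast at hdivR; linarith
    have hang : (m:ℝ) * Real.pi / N = φ - Real.pi := by
      rw [hφ, hmR]
      field_simp
    rw [hang, Real.sin_sub_pi, Real.cos_sub_pi]
    simp only [Complex.ofReal_neg]
    linear_combination -key

lemma center_sing (N : ℕ) (hN : 3 ≤ N) : zLine ∈ Sing (PgonArr N) := by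
  have hfin : {L ∈ PgonArr N | onLine L zLine}.Finite :=
    (pgon_finite N).subset (fun L hL => hL.1)
  have hpair : ({axisLine N 0, axisLine N 1} : Set Pt) ⊆ {L ∈ PgonArr N | onLine L zLine} := by
    rintro L (rfl | rfl)
    · exact ⟨axis_mem N 0 (by omega), axis_through_center N 0⟩
    · exact ⟨axis_mem N 1 (by omega), axis_through_center N 1⟩
  show 2 ≤ mult (PgonArr N) zLine
  calc 2 = ({axisLine N 0, axisLine N 1} : Set Pt).ncard := (Set.ncard_pair (axis01_ne N hN)).symm
    _ ≤ _ := Set.ncard_le_ncard hpair hfin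

/-- For `N ≥ 3`, the `N`-gonal arrangement `P_N` is supersolvable; in fact the
center `(0:0:1)` of the `N`-gon is a modular point. -/
theorem stmt4 (N : ℕ) (hN : 3 ≤ N) :
    Modular (PgonArr N) zLine ∧ Supersolvable (PgonArr N) := by
  have hmod : Modular (PgonArr N) zLine := by
    refine ⟨center_sing N hN, ?_⟩
    intro Q hQ _
    have hfin : {L ∈ PgonArr N | onLine L Q}.Finite :=
      (pgon_finite N).subset (fun L hL => hL.1)
    have h2 : 1 < {L ∈ PgonArr N | onLine L Q}.ncard := hQ
    rw [Set.one_lt_ncard_iff hfin] at h2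
    obtain ⟨L₁, L₂, ⟨hL₁A, hL₁Q⟩, ⟨hL₂A, hL₂Q⟩, hne⟩ := h2
    rcases hL₁A with ⟨j, hj, rfl⟩ | ⟨j, hj, rfl⟩
    · rcases hL₂A with ⟨i, hi, rfl⟩ | ⟨i, hi, rfl⟩
      · -- both sides
        have hji : j ≠ i := fun h => hne (by rw [h])
        refine ⟨axisLine N ((j + i + 1) % N), axis_mem N _ (Nat.mod_lt _ (by omega)),
          axis_through_center N _, side_side_axis N j i hN hj hi hji Q hL₁Q hL₂Q⟩
      · exact ⟨axisLine N i, axis_mem N i hi, axis_through_center N i, hL₂Q⟩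
    · exact ⟨axisLine N j, axis_mem N j hj, axis_through_center N j, hL₁Q⟩
  exact ⟨hmod, zLine, hmod⟩


end
end

section
/- For every integer N ≥ 3, the complete N-gonal arrangement P̄_N = P_N ∪ {z = 0} is supersolvable if and only if N is even. -/
open MvPolynomial

noncomputable section

/-!
For even `N` the centre `(0:0:1)` is modular. The lines of `P̄_N` through it are the axes, and
every singular point lies on an axis: two sides `j ≠ k` meet on the line through the centre at
angle `(j+k+1)π/N`, the bisector of their normal angles, and side `k` meets `z = 0` in the
direction `(2k+1)π/N + π/2`, which is an axis angle exactly when `N` is even.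

For odd `N` no two sides are parallel and no axis is parallel to a side, so the only lines of
`P̄_N` through the point at infinity of side `k` are that side and `z = 0`. Hence a modular point
off `z = 0` lies on every side, which three sides already forbid. A modular point on `z = 0` lies
on no side (join it with the centre), so its joins with the vertices `V₀` and `V₁` are axes; it
then lies on two distinct lines through the centre, which meet only there.
-/

open Complex Projectivization
open scoped Real

section Trigonometry

variable {N : ℕ}

lemma dvd_of_sin_int_mul_pi_div_eq_zero (hN : N ≠ 0) {a : ℤ}
    (h : sin (a * π / N) = 0) : (N : ℤ) ∣ a := by
  obtain ⟨n, hn⟩ := Complex.sin_eq_zero_iff.mp h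
  have : (a : ℂ) = N * n := by
    field_simp at hn
    linear_combination hn
  exact ⟨n, by exact_mod_cast this⟩

lemma exists_of_cos_int_mul_pi_div_eq_zero (hN : N ≠ 0) {a : ℤ}
    (h : cos (a * π / N) = 0) : ∃ n : ℤ, 2 * a = (2 * n + 1) * N := by
  obtain ⟨n, hn⟩ := Complex.cos_eq_zero_iff.mp h
  have : (2 * a : ℂ) = (2 * n + 1) * N := by
    field_simp at hn
    linear_combination hn
  exact ⟨n, by exact_mod_cast this⟩

lemma sin_int_mul_pi_div_ne_zero {a : ℤ} (ha : a ≠ 0) (haN : |a| < N) :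
    sin (a * π / N) ≠ 0 := fun h =>
  ha (Int.eq_zero_of_abs_lt_dvd
    (dvd_of_sin_int_mul_pi_div_eq_zero (by have := abs_nonneg a; omega) h) haN)

lemma cos_int_mul_pi_div_ne_zero_of_odd (hN : Odd N) (a : ℤ) : cos (a * π / N) ≠ 0 := by
  intro h
  obtain ⟨n, hn⟩ := exists_of_cos_int_mul_pi_div_eq_zero (by rintro rfl; simp at hN) h
  have hodd : Odd ((2 * n + 1) * (N : ℤ)) := (odd_two_mul_add_one n).mul (by exact_mod_cast hN)
  rw [← hn] at hodd
  exact Int.not_even_iff_odd.mpr hodd (even_two_mul a)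

lemma cos_pi_div_ne_zero (hN : 3 ≤ N) : cos (π / N) ≠ 0 := by
  intro h
  obtain ⟨n, hn⟩ :=
    exists_of_cos_int_mul_pi_div_eq_zero (N := N) (a := 1) (by omega) (by simpa using h)
  have : (N : ℤ) ≤ 2 := Int.le_of_dvd two_pos ⟨2 * n + 1, by linarith⟩
  omega

lemma sin_two_pi_div_ne_zero (hN : 3 ≤ N) : sin (2 * π / N) ≠ 0 := by
  simpa using sin_int_mul_pi_div_ne_zero (N := N) (a := 2) two_ne_zero (by simp; omega)

end Trigonometry

lemma onLine_mk_mk {v w : Fin 3 → ℂ} (hv : v ≠ 0) (hw : w ≠ 0) :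
    onLine (mk ℂ v hv) (mk ℂ w hw) ↔ v ⬝ᵥ w = 0 := by
  rw [← orthogonal_mk hv hw]
  conv_rhs => rw [← mk_rep (mk ℂ v hv), ← mk_rep (mk ℂ w hw)]
  rfl

lemma mem_Sing_iff {A : Set Pt} (hA : A.Finite) {P : Pt} :
    P ∈ Sing A ↔ ∃ L₁ ∈ A, ∃ L₂ ∈ A, L₁ ≠ L₂ ∧ onLine L₁ P ∧ onLine L₂ P := by
  rw [Sing, Set.mem_ofPred_eq, mult, Nat.add_one_le_iff, Set.one_lt_ncard_iff (hA.sep _)]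
  simp only [Set.mem_ofPred_eq]
  aesop

section Incidence

def perpVec (φ : ℂ) : Fin 3 → ℂ := ![sin φ, -cos φ, 0]

lemma perpVec_ne_zero (φ : ℂ) : perpVec φ ≠ 0 := by
  intro h
  have h0 := congrFun h 0
  have h1 := congrFun h 1
  simp only [perpVec, Matrix.cons_val_zero, Matrix.cons_val_one, Pi.zero_apply,
    neg_eq_zero] at h0 h1
  simpa [h0, h1] using sin_sq_add_cos_sq φ

/-- The line `sin φ · x = cos φ · y` through the centre, with direction angle `φ`. Angles are
complex, so that incidences are equations in `ℂ` without casts from `ℝ`. -/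
def centralLine (φ : ℂ) : Pt := mk ℂ (perpVec φ) (perpVec_ne_zero φ)

def center : Pt := mk ℂ ![0, 0, 1] (by simp)

def vertex (N k : ℕ) : Pt := mk ℂ ![cos (2 * k * π / N), sin (2 * k * π / N), 1] (by simp)

def sideInfinitePoint (N k : ℕ) : Pt :=
  mk ℂ (perpVec ((2 * k + 1) * π / N)) (perpVec_ne_zero _)

variable {w : Fin 3 → ℂ} (hw : w ≠ 0)

lemma onLine_centralLine_mk (φ : ℂ) :
    onLine (centralLine φ) (mk ℂ w hw) ↔ sin φ * w 0 = cos φ * w 1 := by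
  rw [centralLine, onLine_mk_mk, Matrix.vec3_dotProduct]
  simp only [perpVec, Matrix.cons_val_zero, Matrix.cons_val_one, Matrix.cons_val_two,
    Matrix.tail_cons, Matrix.head_cons]
  constructor <;> intro h <;> linear_combination h

lemma onLine_sideLine_mk (N k : ℕ) :
    onLine (sideLine N k) (mk ℂ w hw) ↔
      cos ((2 * k + 1) * π / N) * w 0 + sin ((2 * k + 1) * π / N) * w 1 = cos (π / N) * w 2 := by
  rw [sideLine, onLine_mk_mk, Matrix.vec3_dotProduct]
  simp only [rvec, Matrix.cons_val_zero, Matrix.cons_val_one, Matrix.cons_val_two,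
    Matrix.tail_cons, Matrix.head_cons]
  push_cast
  constructor <;> intro h <;> linear_combination h

lemma onLine_zLine_mk : onLine zLine (mk ℂ w hw) ↔ w 2 = 0 := by
  rw [zLine, mkLine, onLine_mk_mk, Matrix.vec3_dotProduct]
  simp [cvec]

lemma axisLine_eq_centralLine (N m : ℕ) : axisLine N m = centralLine (m * π / N) := by
  simp [axisLine, centralLine, rvec, perpVec]

end Incidence

lemma eq_zero_of_det_ne_zero {a b c d x y : ℂ} (h₁ : a * x + b * y = 0)
    (h₂ : c * x + d * y = 0) (h : a * d - b * c ≠ 0) : x = 0 ∧ y = 0 :=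
  ⟨(mul_eq_zero.mp (by linear_combination d * h₁ - b * h₂)).resolve_left h,
    (mul_eq_zero.mp (by linear_combination a * h₂ - c * h₁)).resolve_left h⟩

lemma eq_zero_of_fin_three {w : Fin 3 → ℂ} (h₀ : w 0 = 0) (h₁ : w 1 = 0) (h₂ : w 2 = 0) :
    w = 0 :=
  funext fun i => by fin_cases i <;> assumption

section CentralLines

variable {N : ℕ} {α β : ℂ}

lemma onLine_centralLine_of_sin_sub_eq_zero (h : sin (α - β) = 0) {P : Pt}
    (hP : onLine (centralLine α) P) : onLine (centralLine β) P := by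
  induction P using Projectivization.ind with | h w hw =>
  rw [onLine_centralLine_mk] at hP ⊢
  have hs : sin β = sin α * cos (α - β) := by
    have := sin_sub α (α - β)
    rw [sub_sub_cancel] at this
    linear_combination this - cos α * h
  have hc : cos β = cos α * cos (α - β) := by
    have := cos_sub α (α - β)
    rw [sub_sub_cancel] at this
    linear_combination this + sin α * h
  rw [hs, hc]
  linear_combination cos (α - β) * hP

lemma eq_zero_of_onLine_centralLine (h : sin (α - β) ≠ 0) {w : Fin 3 → ℂ} {hw : w ≠ 0}
    (hα : onLine (centralLine α) (mk ℂ w hw)) (hβ : onLine (centralLine β) (mk ℂ w hw)) :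
    w 0 = 0 ∧ w 1 = 0 := by
  rw [onLine_centralLine_mk] at hα hβ
  refine eq_zero_of_det_ne_zero (a := sin α) (b := -cos α) (c := sin β) (d := -cos β)
    (by linear_combination hα) (by linear_combination hβ) ?_
  rw [sin_sub] at h
  intro h'
  exact h (by linear_combination -h')

lemma exists_axisLine_of_onLine_centralLine (hN : N ≠ 0) (s : ℕ) {P : Pt}
    (hP : onLine (centralLine (s * π / N)) P) : ∃ m < N, onLine (axisLine N m) P := by
  refine ⟨s % N, Nat.mod_lt _ (by omega), ?_⟩
  rw [axisLine_eq_centralLine]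
  refine onLine_centralLine_of_sin_sub_eq_zero (Complex.sin_eq_zero_iff.mpr ⟨(s / N : ℕ), ?_⟩) hP
  have hs : (s : ℂ) = (s % N : ℕ) + N * (s / N : ℕ) := by exact_mod_cast (Nat.mod_add_div s N).symm
  rw [Int.cast_natCast, hs]
  field_simp
  ring

end CentralLines

section Points

variable {N : ℕ}

lemma onLine_centralLine_center (φ : ℂ) : onLine (centralLine φ) center := by
  simp [center, onLine_centralLine_mk]

lemma not_onLine_sideLine_center (hN : 3 ≤ N) (k : ℕ) : ¬ onLine (sideLine N k) center := by
  simp [center, onLine_sideLine_mk, (cos_pi_div_ne_zero hN).symm]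

lemma not_onLine_zLine_center : ¬ onLine zLine center := by
  simp [center, onLine_zLine_mk]

lemma onLine_sideLine_vertex (N k : ℕ) : onLine (sideLine N k) (vertex N k) := by
  rw [vertex, onLine_sideLine_mk]
  simp only [Matrix.cons_val_zero, Matrix.cons_val_one, Matrix.cons_val_two,
    Matrix.tail_cons, Matrix.head_cons, mul_one]
  rw [← cos_sub]
  ring_nf

lemma onLine_centralLine_vertex_iff (φ : ℂ) (k : ℕ) :
    onLine (centralLine φ) (vertex N k) ↔ sin (φ - 2 * k * π / N) = 0 := by
  rw [vertex, onLine_centralLine_mk, sin_sub, sub_eq_zero]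
  simp

lemma not_onLine_zLine_vertex (k : ℕ) : ¬ onLine zLine (vertex N k) := by
  simp [vertex, onLine_zLine_mk]

lemma onLine_sideLine_sideInfinitePoint (N k : ℕ) :
    onLine (sideLine N k) (sideInfinitePoint N k) := by
  rw [sideInfinitePoint, onLine_sideLine_mk]
  simp only [perpVec, Matrix.cons_val_zero, Matrix.cons_val_one, Matrix.cons_val_two,
    Matrix.tail_cons, Matrix.head_cons, mul_zero]
  ring

lemma onLine_zLine_sideInfinitePoint (N k : ℕ) : onLine zLine (sideInfinitePoint N k) := by
  simp [sideInfinitePoint, onLine_zLine_mk, perpVec]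

end Points

section Arrangement

variable {N : ℕ}

lemma sideLine_mem {k : ℕ} (hk : k < N) : sideLine N k ∈ PbarArr N :=
  Or.inl (Or.inl ⟨k, hk, rfl⟩)

lemma axisLine_mem {m : ℕ} (hm : m < N) : axisLine N m ∈ PbarArr N :=
  Or.inl (Or.inr ⟨m, hm, rfl⟩)

lemma zLine_mem : zLine ∈ PbarArr N := Or.inr rfl

lemma PbarArr_finite (N : ℕ) : (PbarArr N).Finite := by
  have h : ∀ f : ℕ → Pt, {L | ∃ k < N, L = f k}.Finite := fun f =>
    ((Set.finite_Iio N).image f).subset (by rintro _ ⟨k, hk, rfl⟩; exact ⟨k, hk, rfl⟩)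
  exact ((h _).union (h _)).union (Set.finite_singleton _)

lemma center_mem_Sing (hN : 3 ≤ N) : center ∈ Sing (PbarArr N) := by
  refine (mem_Sing_iff (PbarArr_finite N)).mpr ⟨axisLine N 0, axisLine_mem (by omega),
    axisLine N 1, axisLine_mem (by omega), fun h => ?_, ?_, ?_⟩
  · have h₀ : onLine (axisLine N 0) (vertex N 0) := by
      simp [axisLine_eq_centralLine, onLine_centralLine_vertex_iff]
    rw [h, axisLine_eq_centralLine, onLine_centralLine_vertex_iff] at h₀
    exact sin_int_mul_pi_div_ne_zero (N := N) (a := 1) one_ne_zero (by simp; omega)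
      (by simpa using h₀)
  all_goals rw [axisLine_eq_centralLine]; exact onLine_centralLine_center _

lemma vertex_mem_Sing (hN : 3 ≤ N) {k : ℕ} (hk : k < N) : vertex N k ∈ Sing (PbarArr N) := by
  have hk' : onLine (centralLine ((2 * k : ℕ) * π / N)) (vertex N k) := by
    simp [onLine_centralLine_vertex_iff]
  obtain ⟨m, hm, hmk⟩ := exists_axisLine_of_onLine_centralLine (by omega) (2 * k) hk'
  refine (mem_Sing_iff (PbarArr_finite N)).mpr ⟨sideLine N k, sideLine_mem hk,
    axisLine N m, axisLine_mem hm, fun h => ?_, onLine_sideLine_vertex N k, hmk⟩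
  refine not_onLine_sideLine_center hN k (h ▸ ?_)
  rw [axisLine_eq_centralLine]
  exact onLine_centralLine_center _

lemma sideInfinitePoint_mem_Sing {k : ℕ} (hk : k < N) :
    sideInfinitePoint N k ∈ Sing (PbarArr N) :=
  (mem_Sing_iff (PbarArr_finite N)).mpr ⟨sideLine N k, sideLine_mem hk, zLine, zLine_mem,
    fun h => not_onLine_zLine_vertex k (h ▸ onLine_sideLine_vertex N k),
    onLine_sideLine_sideInfinitePoint N k, onLine_zLine_sideInfinitePoint N k⟩

end Arrangement

section Sides

variable {N : ℕ}

lemma onLine_centralLine_of_onLine_sideLine {j k : ℕ} (hj : j < N) (hk : k < N) (hjk : j ≠ k)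
    {P : Pt} (h₁ : onLine (sideLine N j) P) (h₂ : onLine (sideLine N k) P) :
    onLine (centralLine ((j + k + 1) * π / N)) P := by
  induction P using Projectivization.ind with | h w hw =>
  rw [onLine_sideLine_mk] at h₁ h₂
  rw [onLine_centralLine_mk]
  have hδ : sin ((j - k) * π / N) ≠ 0 := by
    have := sin_int_mul_pi_div_ne_zero (N := N) (a := j - k) (by omega) (by rw [abs_lt]; omega)
    push_cast at this
    exact this
  have e₁ : ((2 * j + 1) * π / N : ℂ) = (j + k + 1) * π / N + (j - k) * π / N := by ring
  have e₂ : ((2 * k + 1) * π / N : ℂ) = (j + k + 1) * π / N - (j - k) * π / N := by ring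
  rw [e₁, cos_add, sin_add] at h₁
  rw [e₂, cos_sub, sin_sub] at h₂
  apply mul_left_cancel₀ (mul_ne_zero two_ne_zero hδ)
  linear_combination h₂ - h₁

lemma onLine_centralLine_of_onLine_sideLine_of_onLine_zLine {k : ℕ} {P : Pt}
    (h₁ : onLine (sideLine N k) P) (h₂ : onLine zLine P) :
    onLine (centralLine ((2 * k + 1) * π / N + π / 2)) P := by
  induction P using Projectivization.ind with | h w hw =>
  rw [onLine_sideLine_mk, (onLine_zLine_mk hw).mp h₂, mul_zero] at h₁
  rw [onLine_centralLine_mk, sin_add_pi_div_two, cos_add_pi_div_two]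
  linear_combination h₁

lemma exists_axisLine_onLine_of_mem_Sing (he : Even N) (hN : N ≠ 0) {Q : Pt}
    (hQ : Q ∈ Sing (PbarArr N)) : ∃ m < N, onLine (axisLine N m) Q := by
  obtain ⟨L₁, h₁, L₂, h₂, hne, hQ₁, hQ₂⟩ := (mem_Sing_iff (PbarArr_finite N)).mp hQ
  obtain ⟨t, rfl⟩ := he
  have side_z : ∀ k, onLine (sideLine (t + t) k) Q → onLine zLine Q →
      ∃ m < t + t, onLine (axisLine (t + t) m) Q := fun k hk hz => by
    refine exists_axisLine_of_onLine_centralLine hN (2 * k + 1 + t) ?_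
    convert onLine_centralLine_of_onLine_sideLine_of_onLine_zLine hk hz using 3
    have : (t : ℂ) ≠ 0 := by exact_mod_cast (by omega : t ≠ 0)
    push_cast
    field_simp
    ring
  rcases h₁ with (⟨j, hj, rfl⟩ | ⟨m, hm, rfl⟩) | rfl
  · rcases h₂ with (⟨k, hk, rfl⟩ | ⟨m, hm, rfl⟩) | rfl
    · refine exists_axisLine_of_onLine_centralLine hN (j + k + 1) ?_
      exact_mod_cast onLine_centralLine_of_onLine_sideLine hj hk (by rintro rfl; exact hne rfl)
        hQ₁ hQ₂
    · exact ⟨m, hm, hQ₂⟩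
    · exact side_z j hQ₁ hQ₂
  · exact ⟨m, hm, hQ₁⟩
  · rcases h₂ with (⟨k, hk, rfl⟩ | ⟨m, hm, rfl⟩) | rfl
    · exact side_z k hQ₂ hQ₁
    · exact ⟨m, hm, hQ₂⟩
    · exact absurd rfl hne

lemma eq_of_onLine_sideLine_of_onLine_zLine (ho : Odd N) {j k : ℕ} (hj : j < N) (hk : k < N)
    {P : Pt} (hjP : onLine (sideLine N j) P) (hkP : onLine (sideLine N k) P)
    (hzP : onLine zLine P) : j = k := by
  induction P using Projectivization.ind with | h w hw =>
  rw [onLine_zLine_mk] at hzP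
  rw [onLine_sideLine_mk, hzP, mul_zero] at hjP hkP
  have hsin : sin ((2 * (j - k) : ℤ) * π / N) = 0 := by
    by_contra h
    obtain ⟨h₀, h₁⟩ := eq_zero_of_det_ne_zero hkP hjP (by
      convert h using 1
      rw [show ((2 * (j - k) : ℤ) : ℂ) * π / N = (2 * j + 1) * π / N - (2 * k + 1) * π / N by
        push_cast; ring, sin_sub]
      ring)
    exact hw (eq_zero_of_fin_three h₀ h₁ hzP)
  obtain ⟨t, ht⟩ := ho
  have hcop : IsCoprime (N : ℤ) 2 := ⟨1, -t, by rw [ht]; push_cast; ring⟩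
  have := Int.eq_zero_of_abs_lt_dvd
    (hcop.dvd_of_dvd_mul_left (dvd_of_sin_int_mul_pi_div_eq_zero (by omega) hsin))
    (by rw [abs_lt]; omega)
  omega

lemma not_onLine_axisLine_of_onLine_sideLine_of_onLine_zLine (ho : Odd N) (m : ℕ) {k : ℕ}
    {P : Pt} (hkP : onLine (sideLine N k) P) (hzP : onLine zLine P) :
    ¬ onLine (axisLine N m) P := by
  induction P using Projectivization.ind with | h w hw =>
  intro hmP
  rw [onLine_zLine_mk] at hzP
  rw [onLine_sideLine_mk, hzP, mul_zero] at hkP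
  rw [axisLine_eq_centralLine, onLine_centralLine_mk] at hmP
  refine cos_int_mul_pi_div_ne_zero_of_odd ho (2 * k + 1 - m) ?_
  by_contra h
  obtain ⟨h₀, h₁⟩ := eq_zero_of_det_ne_zero hkP (c := sin (m * π / N)) (d := -cos (m * π / N))
    (by linear_combination hmP) (by
      rw [show (((2 * k + 1 - m : ℤ)) : ℂ) * π / N = (2 * k + 1) * π / N - m * π / N by
        push_cast; ring, cos_sub] at h
      intro h'
      exact h (by linear_combination -h'))
  exact hw (eq_zero_of_fin_three h₀ h₁ hzP)

lemma eq_sideLine_or_eq_zLine_of_onLine (ho : Odd N) {k : ℕ} (hk : k < N) {P : Pt}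
    (hkP : onLine (sideLine N k) P) (hzP : onLine zLine P) {L : Pt} (hL : L ∈ PbarArr N)
    (hLP : onLine L P) : L = sideLine N k ∨ L = zLine := by
  rcases hL with (⟨j, hj, rfl⟩ | ⟨m, hm, rfl⟩) | rfl
  · exact Or.inl (by rw [eq_of_onLine_sideLine_of_onLine_zLine ho hj hk hLP hkP hzP])
  · exact absurd hLP (not_onLine_axisLine_of_onLine_sideLine_of_onLine_zLine ho m hkP hzP)
  · exact Or.inr rfl

end Sides

section Main

variable {N : ℕ}

theorem supersolvable_PbarArr_of_even (hN : 3 ≤ N) (he : Even N) :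
    Supersolvable (PbarArr N) := by
  refine ⟨center, center_mem_Sing hN, fun Q hQ _ => ?_⟩
  obtain ⟨m, hm, hQm⟩ := exists_axisLine_onLine_of_mem_Sing he (by omega) hQ
  refine ⟨axisLine N m, axisLine_mem hm, ?_, hQm⟩
  rw [axisLine_eq_centralLine]
  exact onLine_centralLine_center _

theorem not_modular_of_onLine_zLine (hN : 3 ≤ N) (ho : Odd N) {P : Pt}
    (hzP : onLine zLine P) : ¬ Modular (PbarArr N) P := by
  rintro ⟨-, hP⟩
  have hside : ∀ k < N, ¬ onLine (sideLine N k) P := by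
    intro k hk hkP
    obtain ⟨L, hL, hLP, hLc⟩ := hP center (center_mem_Sing hN)
      (fun h => not_onLine_zLine_center (h ▸ hzP))
    rcases eq_sideLine_or_eq_zLine_of_onLine ho hk hkP hzP hL hLP with rfl | rfl
    · exact not_onLine_sideLine_center hN k hLc
    · exact not_onLine_zLine_center hLc
  have hvertex : ∀ k < N, onLine (centralLine (2 * k * π / N)) P := by
    intro k hk
    obtain ⟨L, hL, hLP, hLv⟩ := hP (vertex N k) (vertex_mem_Sing hN hk)
      (fun h => not_onLine_zLine_vertex k (h ▸ hzP))
    rcases hL with (⟨j, hj, rfl⟩ | ⟨m, hm, rfl⟩) | rfl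
    · exact absurd hLP (hside j hj)
    · rw [axisLine_eq_centralLine] at hLv hLP
      exact onLine_centralLine_of_sin_sub_eq_zero ((onLine_centralLine_vertex_iff _ _).mp hLv) hLP
    · exact absurd hLv (not_onLine_zLine_vertex k)
  induction P using Projectivization.ind with | h w hw =>
  obtain ⟨h₀, h₁⟩ := eq_zero_of_onLine_centralLine
    (by convert sin_two_pi_div_ne_zero hN using 2; push_cast; ring)
    (hvertex 1 (by omega)) (hvertex 0 (by omega))
  have h₂ := (onLine_zLine_mk hw).mp hzP
  exact hw (eq_zero_of_fin_three h₀ h₁ h₂)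

theorem not_modular_of_not_onLine_zLine (hN : 3 ≤ N) (ho : Odd N) {P : Pt}
    (hzP : ¬ onLine zLine P) : ¬ Modular (PbarArr N) P := by
  rintro ⟨-, hP⟩
  have hside : ∀ k < N, onLine (sideLine N k) P := by
    intro k hk
    obtain ⟨L, hL, hLP, hLq⟩ := hP (sideInfinitePoint N k) (sideInfinitePoint_mem_Sing hk)
      (fun h => hzP (h ▸ onLine_zLine_sideInfinitePoint N k))
    rcases eq_sideLine_or_eq_zLine_of_onLine ho hk (onLine_sideLine_sideInfinitePoint N k)
      (onLine_zLine_sideInfinitePoint N k) hL hLq with rfl | rfl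
    · exact hLP
    · exact absurd hLP hzP
  have h₀₁ := onLine_centralLine_of_onLine_sideLine (by omega) (by omega) (by omega)
    (hside 0 (by omega)) (hside 1 (by omega))
  have h₁₂ := onLine_centralLine_of_onLine_sideLine (by omega) (by omega) (by omega)
    (hside 1 (by omega)) (hside 2 (by omega))
  induction P using Projectivization.ind with | h w hw =>
  obtain ⟨h₀, h₁⟩ := eq_zero_of_onLine_centralLine
    (by convert sin_two_pi_div_ne_zero hN using 2; push_cast; ring) h₁₂ h₀₁
  have h₂ := (onLine_sideLine_mk hw N 0).mp (hside 0 (by omega))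
  rw [h₀, h₁] at h₂
  exact hzP ((onLine_zLine_mk hw).mpr
    ((mul_eq_zero.mp (by linear_combination -h₂)).resolve_left (cos_pi_div_ne_zero hN)))

end Main

/-- For `N ≥ 3`, the complete `N`-gonal arrangement is supersolvable iff `N` is even. -/
theorem stmt5 (N : ℕ) (hN : 3 ≤ N) :
    Supersolvable (PbarArr N) ↔ Even N := by
  refine ⟨fun ⟨P, hP⟩ => Nat.not_odd_iff_even.mp fun ho => ?_, supersolvable_PbarArr_of_even hN⟩
  by_cases hzP : onLine zLine P
  · exact not_modular_of_onLine_zLine hN ho hzP hP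
  · exact not_modular_of_not_onLine_zLine hN ho hzP hP
end
end

section
/- Let k > j ≥ 0 be integers and let d_{j+1} be the line x − y + (j+1)z = 0 in ℙ²(ℂ). Then the lines of the complete tic-tac-toe arrangement T̄_k^j meet d_{j+1} in exactly 2k + 2j + 4 distinct points, i.e., the set {L ∩ d_{j+1} : L ∈ T̄_k^j} has cardinality 2k + 2j + 4. -/
open MvPolynomial

noncomputable section

-- AUX START
lemma onLine_mk_iff (v w : Fin 3 → ℂ) (hv : v ≠ 0) (hw : w ≠ 0) :
    onLine (Projectivization.mk ℂ v hv) (Projectivization.mk ℂ w hw) ↔ ∑ i, v i * w i = 0 := by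
  obtain ⟨a, ha⟩ := Projectivization.exists_smul_eq_mk_rep ℂ v hv
  obtain ⟨b, hb⟩ := Projectivization.exists_smul_eq_mk_rep ℂ w hw
  unfold onLine
  rw [← ha, ← hb]
  have key : ∑ i, (a • v) i * (b • w) i = ((a : ℂ) * b) * ∑ i, v i * w i := by
    rw [Finset.mul_sum]
    refine Finset.sum_congr rfl fun i _ => ?_
    simp only [Pi.smul_apply, Units.smul_def, smul_eq_mul]; ring
  rw [key, mul_eq_zero]
  have hab : ((a : ℂ) * b) ≠ 0 := by
    exact mul_ne_zero (Units.ne_zero a) (Units.ne_zero b)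
  tauto

lemma ptOf_ne (c t : ℂ) : ![t, t + c, 1] ≠ 0 := by
  intro h; simpa using congrFun h 2

def ptOf (c t : ℂ) : Pt := Projectivization.mk ℂ ![t, t + c, 1] (ptOf_ne c t)

lemma infPt_ne : (![1, 1, 0] : Fin 3 → ℂ) ≠ 0 := by
  intro h; simpa using congrFun h 0

def infPt : Pt := Projectivization.mk ℂ ![1, 1, 0] infPt_ne

lemma ptOf_inj (c : ℂ) : Function.Injective (ptOf c) := by
  intro s t h
  rw [ptOf, ptOf, Projectivization.mk_eq_mk_iff] at h
  obtain ⟨a, ha⟩ := h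
  have h2 : (a : ℂ) * 1 = 1 := by simpa [Units.smul_def, smul_eq_mul] using congrFun ha 2
  have h0 : (a : ℂ) * t = s := by simpa [Units.smul_def, smul_eq_mul] using congrFun ha 0
  rw [mul_one] at h2
  rw [h2, one_mul] at h0
  exact h0.symm

lemma infPt_ne_ptOf (c t : ℂ) : infPt ≠ ptOf c t := by
  intro h
  rw [infPt, ptOf, Projectivization.mk_eq_mk_iff] at h
  obtain ⟨a, ha⟩ := h
  have h2 : (a : ℂ) * 1 = 0 := by simpa [Units.smul_def, smul_eq_mul] using congrFun ha 2
  rw [mul_one] at h2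
  exact Units.ne_zero a h2

lemma onLine_mkLine_ptOf (a b d cc t : ℂ) (h : cvec a b d ≠ 0) :
    onLine (mkLine a b d h) (ptOf cc t) ↔ a * t + b * (t + cc) + d = 0 := by
  rw [mkLine, ptOf, onLine_mk_iff]
  simp [cvec, Fin.sum_univ_three]

lemma onLine_mkLine_infPt (a b d : ℂ) (h : cvec a b d ≠ 0) :
    onLine (mkLine a b d h) infPt ↔ a + b = 0 := by
  rw [mkLine, infPt, onLine_mk_iff]
  simp [cvec, Fin.sum_univ_three]
-- AUX END

example : True := trivial

/-- For `k > j ≥ 0`, the lines of `T̄_k^j` meet the diagonal `d_{j+1}` in exactly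
`2k + 2j + 4` distinct points. -/
theorem stmt11 (k j : ℕ) (hkj : j < k) :
    {P : Pt | onLine (diagLine ((j : ℤ) + 1)) P ∧ ∃ L ∈ TTT k j, onLine L P}.ncard
      = 2 * k + 2 * j + 4 := by
  classical
  set c : ℂ := (j : ℂ) + 1 with hc
  set TI : Finset ℤ := Finset.Icc (-(k : ℤ) - j - 1) k with hTI
  set TH : Finset ℤ := Finset.Icc 0 (j : ℤ) with hTH
  set T : Finset ℂ := TI.image (fun n : ℤ => (n : ℂ)) ∪
    TH.image (fun m : ℤ => -(m : ℂ) - 1/2) with hT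
  set F : Finset Pt := insert infPt (T.image (ptOf c)) with hF
  have hset : {P : Pt | onLine (diagLine ((j : ℤ) + 1)) P ∧ ∃ L ∈ TTT k j, onLine L P} = ↑F := by
    ext P
    simp only [Set.mem_setOf_eq, hF, Finset.coe_insert, Set.mem_insert_iff, Finset.coe_image,
      Set.mem_image, Finset.mem_coe]
    constructor
    · rintro ⟨hd, L, hL, hLP⟩
      have hP : P = Projectivization.mk ℂ P.rep P.rep_nonzero := (Projectivization.mk_rep P).symm
      rw [hP, diagLine, mkLine, onLine_mk_iff] at hd
      rw [Fin.sum_univ_three] at hd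
      simp only [cvec, Matrix.cons_val_zero, Matrix.cons_val_one, Matrix.head_cons,
        Matrix.cons_val_two, Matrix.tail_cons] at hd
      push_cast at hd
      set w := P.rep with hw
      -- hd : 1 * w 0 + -1 * w 1 + ((j:ℂ)+1) * w 2 = 0 (roughly)
      by_cases h2 : w 2 = 0
      · left
        have h01 : w 0 = w 1 := by rw [h2] at hd; linear_combination hd
        have h0 : w 0 ≠ 0 := by
          intro h0
          apply P.rep_nonzero
          funext i
          fin_cases i
          · exact h0
          · exact h01.symm.trans h0
          · exact h2
        rw [hP, infPt, Projectivization.mk_eq_mk_iff]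
        refine ⟨Units.mk0 (w 0) h0, ?_⟩
        funext i
        fin_cases i
        · show (Units.mk0 (w 0) h0 : ℂ) * 1 = w 0
          simp
        · show (Units.mk0 (w 0) h0 : ℂ) * 1 = w 1
          simp [h01]
        · show (Units.mk0 (w 0) h0 : ℂ) * 0 = w 2
          simp [h2]
      · right
        set t : ℂ := w 0 / w 2 with ht
        have hPt : P = ptOf c t := by
          rw [hP, ptOf, Projectivization.mk_eq_mk_iff]
          refine ⟨Units.mk0 (w 2) h2, ?_⟩
          funext i
          fin_cases i
          · show w 2 • t = w 0
            rw [smul_eq_mul, ht, mul_div_cancel₀ _ h2]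
          · show w 2 • (t + c) = w 1
            rw [smul_eq_mul, ht, mul_add, mul_div_cancel₀ _ h2]
            linear_combination hd + w 2 * hc
          · show w 2 • (1 : ℂ) = w 2
            rw [smul_eq_mul, mul_one]
        refine ⟨t, ?_, hPt.symm⟩
        rw [hPt] at hLP
        simp only [TTT, Set.mem_union, Set.mem_setOf_eq, Set.mem_singleton_iff] at hL
        rcases hL with ((((⟨i, hi1, hi2, rfl⟩ | ⟨i, hi1, hi2, rfl⟩) | ⟨i, hi1, hi2, rfl⟩) |
          ⟨i, hi1, hi2, rfl⟩) | rfl)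
        · -- vertical
          rw [vertLine, onLine_mkLine_ptOf] at hLP
          have hti : t = (i : ℂ) := by linear_combination hLP
          rw [hT]
          refine Finset.mem_union_left _ (Finset.mem_image.mpr ⟨i, ?_, hti.symm⟩)
          rw [hTI, Finset.mem_Icc]; omega
        · -- horizontal
          rw [horizLine, onLine_mkLine_ptOf, hc] at hLP
          have hti : t = ((i - (j : ℤ) - 1 : ℤ) : ℂ) := by push_cast; linear_combination hLP
          rw [hT]
          refine Finset.mem_union_left _ (Finset.mem_image.mpr ⟨i - j - 1, ?_, hti.symm⟩)
          rw [hTI, Finset.mem_Icc]; omega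
        · -- diagonal: impossible
          exfalso
          rw [diagLine, onLine_mkLine_ptOf, hc] at hLP
          have : (i : ℂ) = (((j : ℤ) + 1 : ℤ) : ℂ) := by push_cast; linear_combination hLP
          have : i = (j : ℤ) + 1 := by exact_mod_cast this
          omega
        · -- antidiagonal
          rw [antiDiagLine, onLine_mkLine_ptOf, hc] at hLP
          rcases Int.even_or_odd (i + (j : ℤ) + 1) with ⟨m, hm⟩ | ⟨m, hm⟩
          · have hm2 : (i : ℂ) + (j : ℂ) + 1 = (m : ℂ) + (m : ℂ) := by exact_mod_cast hm
            have hti : t = ((-m : ℤ) : ℂ) := by push_cast; linear_combination hLP / 2 - hm2 / 2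
            rw [hT]
            refine Finset.mem_union_left _ (Finset.mem_image.mpr ⟨-m, ?_, hti.symm⟩)
            rw [hTI, Finset.mem_Icc]; omega
          · have hm2 : (i : ℂ) + (j : ℂ) + 1 = 2 * (m : ℂ) + 1 := by exact_mod_cast hm
            have hti : t = -(m : ℂ) - 1/2 := by linear_combination hLP / 2 - hm2 / 2
            rw [hT]
            refine Finset.mem_union_right _ (Finset.mem_image.mpr ⟨m, ?_, hti.symm⟩)
            rw [hTH, Finset.mem_Icc]; omega
        · -- zLine: impossible
          exfalso
          rw [zLine, onLine_mkLine_ptOf] at hLP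
          simp at hLP
    · rintro (rfl | ⟨t, htT, rfl⟩)
      · refine ⟨?_, diagLine 0, ?_, ?_⟩
        · rw [diagLine, onLine_mkLine_infPt]; ring
        · simp only [TTT, Set.mem_union, Set.mem_setOf_eq]
          exact Or.inl (Or.inl (Or.inr ⟨0, by omega, by omega, rfl⟩))
        · rw [diagLine, onLine_mkLine_infPt]; ring
      · refine ⟨?_, ?_⟩
        · rw [diagLine, onLine_mkLine_ptOf, hc]; push_cast; ring
        · rw [hT, Finset.mem_union] at htT
          rcases htT with h | h
          · obtain ⟨n, hn, rfl⟩ := Finset.mem_image.mp h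
            rw [hTI, Finset.mem_Icc] at hn
            by_cases hn' : -(k : ℤ) ≤ n
            · refine ⟨vertLine n, ?_, ?_⟩
              · simp only [TTT, Set.mem_union, Set.mem_setOf_eq]
                exact Or.inl (Or.inl (Or.inl (Or.inl ⟨n, hn', by omega, rfl⟩)))
              · rw [vertLine, onLine_mkLine_ptOf]; push_cast; ring
            · refine ⟨horizLine (n + j + 1), ?_, ?_⟩
              · simp only [TTT, Set.mem_union, Set.mem_setOf_eq]
                exact Or.inl (Or.inl (Or.inl (Or.inr ⟨n + j + 1, by omega, by omega, rfl⟩)))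
              · rw [horizLine, onLine_mkLine_ptOf, hc]; push_cast; ring
          · obtain ⟨m, hm, rfl⟩ := Finset.mem_image.mp h
            rw [hTH, Finset.mem_Icc] at hm
            refine ⟨antiDiagLine (2 * m - j), ?_, ?_⟩
            · simp only [TTT, Set.mem_union, Set.mem_setOf_eq]
              exact Or.inl (Or.inr ⟨2 * m - j, by omega, by omega, rfl⟩)
            · rw [antiDiagLine, onLine_mkLine_ptOf, hc]; push_cast; ring
  rw [hset, Set.ncard_coe_finset]
  have hnotmem : infPt ∉ T.image (ptOf c) := by
    simp only [Finset.mem_image]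
    rintro ⟨t, -, ht⟩
    exact infPt_ne_ptOf c t ht.symm
  have hdisj : Disjoint (TI.image (fun n : ℤ => (n : ℂ)))
      (TH.image (fun m : ℤ => -(m : ℂ) - 1/2)) := by
    rw [Finset.disjoint_left]
    rintro x hx hx'
    obtain ⟨n, -, rfl⟩ := Finset.mem_image.mp hx
    obtain ⟨m, -, hm⟩ := Finset.mem_image.mp hx'
    have h2 : ((2 * n : ℤ) : ℂ) = ((-(2 * m) - 1 : ℤ) : ℂ) := by push_cast; linear_combination -2 * hm
    have h3 : (2 * n : ℤ) = -(2 * m) - 1 := by exact_mod_cast h2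
    omega
  have hinj2 : Function.Injective (fun m : ℤ => -(m : ℂ) - 1/2) := by
    intro a b h
    have : (a : ℂ) = (b : ℂ) := by linear_combination -h
    exact_mod_cast this
  rw [hF, Finset.card_insert_of_notMem hnotmem,
    Finset.card_image_of_injective _ (ptOf_inj c), hT,
    Finset.card_union_of_disjoint hdisj,
    Finset.card_image_of_injective _ (Int.cast_injective (α := ℂ)),
    Finset.card_image_of_injective _ hinj2, hTI, hTH, Int.card_Icc, Int.card_Icc]
  omega


end
end
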